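/- arXiv:1008.2250 — 6 statements merged into one kernel-verified Lean document; each statement's English description precedes it below -/
import Mathlib

section
/- Let G be a graph and s a non-negative integer. If the square graph G² has a proper integer colouring in which every edge of G has span at most s, then G² is (2s+1)-colourable. -/
/-- The square of a graph: two distinct vertices are adjacent if they are
adjacent in `G` or have a common neighbour in `G`. -/
def SimpleGraph.square' {V : Type*} (G : SimpleGraph V) : SimpleGraph V where
  Adj u v := u ≠ v ∧ (G.Adj u v ∨ ∃ w, G.Adj u w ∧ G.Adj w v)
  symm := ⟨fun u v => by
    rintro ⟨hne, h | ⟨w, h1, h2⟩⟩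
    · exact ⟨hne.symm, Or.inl h.symm⟩
    · exact ⟨hne.symm, Or.inr ⟨w, h2.symm, h1.symm⟩⟩⟩
  loopless := ⟨fun u => by rintro ⟨hne, -⟩; exact hne rfl⟩

/-!
Reduce the colours modulo `2s + 1`. Adjacent vertices of `G²` are at distance at most two in `G`,
so by the triangle inequality their colours differ by at most `2s`; being distinct, they stay
distinct modulo `2s + 1`.
-/

namespace SimpleGraph

variable {V : Type*}

theorem colorable_of_abs_sub_lt (H : SimpleGraph V) (n : ℕ) [NeZero n] (c : V → ℤ)
    (hc : ∀ v w, H.Adj v w → c v ≠ c w) (hspan : ∀ v w, H.Adj v w → |c v - c w| < n) :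
    H.Colorable n := by
  let C : H.Coloring (ZMod n) := Coloring.mk (fun v => (c v : ZMod n)) fun {v w} hadj heq => by
    have hdvd : (n : ℤ) ∣ c v - c w := (ZMod.intCast_eq_intCast_iff_dvd_sub _ _ _).mp heq.symm
    exact hc v w hadj (sub_eq_zero.mp (Int.eq_zero_of_abs_lt_dvd hdvd (hspan v w hadj)))
  simpa using C.colorable

theorem abs_sub_le_two_mul_of_square'_adj {G : SimpleGraph V} (c : V → ℤ) (s : ℤ)
    (hspan : ∀ v w, G.Adj v w → |c v - c w| ≤ s) {v w : V} (h : G.square'.Adj v w) :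
    |c v - c w| ≤ 2 * s := by
  obtain ⟨-, hvw | ⟨u, hvu, huw⟩⟩ := h
  · have := hspan v w hvw
    have : 0 ≤ s := (abs_nonneg _).trans this
    linarith
  · calc |c v - c w| ≤ |c v - c u| + |c u - c w| := abs_sub_le _ _ _
      _ ≤ 2 * s := by linarith [hspan v u hvu, hspan u w huw]

end SimpleGraph

theorem square_span_colouring {V : Type*} (G : SimpleGraph V) (s : ℕ)
    (c : V → ℤ) (hc : ∀ v w, G.square'.Adj v w → c v ≠ c w)
    (hspan : ∀ v w, G.Adj v w → |c v - c w| ≤ (s : ℤ)) :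
    G.square'.chromaticNumber ≤ (2 * s + 1 : ℕ) := by
  refine (G.square'.colorable_of_abs_sub_lt (2 * s + 1) c hc fun v w h => ?_).chromaticNumber_le
  have := SimpleGraph.abs_sub_le_two_mul_of_square'_adj c s hspan h
  push_cast
  omega
end

section
/- For every finite tree T with at least one edge and every non-negative integer s, the square T² has a proper integer colouring c such that every edge vw of T satisfies s+1 ≤ |c(v) − c(w)| ≤ s + ⌈Δ(T)/2⌉, where Δ(T) is the maximum degree of T. -/
open Finset

lemma exists_offset_add_notMem (s k : ℕ) (a : ℤ) {F : Finset ℤ} (hF : #F < 2 * k) :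
    ∃ o : ℤ, ((s : ℤ) + 1 ≤ |o| ∧ |o| ≤ (s : ℤ) + k) ∧ a + o ∉ F := by
  set O := Icc (-((s : ℤ) + k)) (s + k) \ Icc (-(s : ℤ)) s
  have hO : #(O.image (a + ·)) = 2 * k := by
    rw [card_image_of_injective _ (add_right_injective a),
      card_sdiff_of_subset (Icc_subset_Icc (by omega) (by omega)), Int.card_Icc, Int.card_Icc]
    omega
  obtain ⟨_, hmem, hnotMem⟩ := exists_mem_notMem_of_card_lt_card (hO ▸ hF)
  obtain ⟨o, ho, rfl⟩ := mem_image.mp hmem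
  simp only [O, mem_sdiff, mem_Icc] at ho
  exact ⟨o, by constructor <;> cases abs_cases o <;> omega, hnotMem⟩

namespace SimpleGraph

def IsSpanColouring {V : Type*} (G : SimpleGraph V) (s k : ℕ) (c : V → ℤ) : Prop :=
  (∀ v w, G.square'.Adj v w → c v ≠ c w) ∧
    ∀ v w, G.Adj v w → (s : ℤ) + 1 ≤ |c v - c w| ∧ |c v - c w| ≤ (s : ℤ) + k

lemma square'_adj_induce_compl_singleton {V : Type*} {G : SimpleGraph V} {u p : V}
    (hu : ∀ w, G.Adj u w → w = p) {v w : V} (hv : v ≠ u) (hw : w ≠ u)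
    (h : G.square'.Adj v w) : (G.induce {u}ᶜ).square'.Adj ⟨v, hv⟩ ⟨w, hw⟩ := by
  obtain ⟨hne, hadj | ⟨x, hvx, hxw⟩⟩ := h
  · exact ⟨Subtype.coe_ne_coe.mp hne, Or.inl hadj⟩
  refine ⟨Subtype.coe_ne_coe.mp hne, Or.inr ⟨⟨x, fun hx => hne ?_⟩, hvx, hxw⟩⟩
  subst hx
  rw [hu v hvx.symm, hu w hxw]

lemma IsSpanColouring.exists_update_of_leaf {V : Type*} [DecidableEq V] {G : SimpleGraph V}
    {s k : ℕ} {c : V → ℤ} {u p : V} [Fintype (G.neighborSet p)]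
    (hc : (G.induce {u}ᶜ).IsSpanColouring s k (c ∘ Subtype.val))
    (hup : G.Adj u p) (hu : ∀ w, G.Adj u w → w = p) (hp : G.degree p ≤ 2 * k) :
    ∃ x, G.IsSpanColouring s k (Function.update c u x) := by
  set F := ((G.neighborFinset p).erase u).image c
  have hF : #F < 2 * k := by
    have hup' : u ∈ G.neighborFinset p := (G.mem_neighborFinset p u).mpr hup.symm
    have hFle : #F ≤ #((G.neighborFinset p).erase u) := card_image_le
    have := card_erase_add_one hup'
    rw [card_neighborFinset_eq_degree] at this
    omega
  obtain ⟨o, ho, hoF⟩ := exists_offset_add_notMem s k (c p) hF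
  have hsquare : ∀ w, w ≠ u → G.square'.Adj u w → c p + o ≠ c w := by
    rintro w hw ⟨-, huw | ⟨x, hux, hxw⟩⟩ hcol
    · obtain rfl := hu w huw
      cases abs_cases o <;> omega
    · obtain rfl := hu x hux
      have hw' : w ∈ (G.neighborFinset x).erase u :=
        mem_erase.mpr ⟨hw, (G.mem_neighborFinset _ _).mpr hxw⟩
      exact hoF (hcol ▸ mem_image_of_mem c hw')
  refine ⟨c p + o, fun v w hvw => ?_, fun v w hvw => ?_⟩
  · rcases eq_or_ne v u with rfl | hv
    · simpa [hvw.ne'] using hsquare w hvw.ne' hvw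
    rcases eq_or_ne w u with rfl | hw
    · simpa [hv] using (hsquare v hv hvw.symm).symm
    simpa [hv, hw] using hc.1 _ _ (square'_adj_induce_compl_singleton hu hv hw hvw)
  · rcases eq_or_ne v u with rfl | hv
    · obtain rfl := hu w hvw
      simpa [hvw.ne'] using ho
    rcases eq_or_ne w u with rfl | hw
    · obtain rfl := hu v hvw.symm
      simpa [hv, abs_sub_comm] using ho
    simpa [hv, hw] using hc.2 ⟨v, hv⟩ ⟨w, hw⟩ hvw

theorem IsTree.exists_isSpanColouring {V : Type*} [Fintype V] {T : SimpleGraph V}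
    [DecidableRel T.Adj] (hT : T.IsTree) (s : ℕ) {k : ℕ} (hk : T.maxDegree ≤ 2 * k) :
    ∃ c, T.IsSpanColouring s k c := by
  classical
  rcases subsingleton_or_nontrivial V with hV | hV
  · exact ⟨0, fun v w h => (h.1 (Subsingleton.elim v w)).elim,
      fun v w h => (h.ne (Subsingleton.elim v w)).elim⟩
  obtain ⟨u, hu⟩ := hT.exists_vert_degree_one_of_nontrivial
  obtain ⟨p, hup, huniq⟩ := degree_eq_one_iff_existsUnique_adj.mp hu
  have hT' : (T.induce {u}ᶜ).IsTree :=
    ⟨hT.connected.induce_compl_singleton_of_degree_eq_one hu, hT.isAcyclic.induce _⟩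
  obtain ⟨c', hc'⟩ := hT'.exists_isSpanColouring s
    ((Copy.maxDegree_mono (Embedding.induce _).toCopy).trans hk)
  set c : V → ℤ := fun v => if h : v = u then 0 else c' ⟨v, h⟩
  have hc : c ∘ Subtype.val = c' := funext fun v => dif_neg v.2
  obtain ⟨x, hx⟩ := IsSpanColouring.exists_update_of_leaf (hc ▸ hc') hup huniq
    ((T.degree_le_maxDegree p).trans hk)
  exact ⟨_, hx⟩
termination_by Fintype.card V
decreasing_by
  classical
  exact Fintype.card_subtype_lt (x := u) (by simp)

end SimpleGraph

theorem tree_square_span_colouring_general {V : Type*} [Fintype V]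
    (T : SimpleGraph V) [DecidableRel T.Adj]
    (hT : T.IsTree) (s : ℕ) :
    ∃ c : V → ℤ, (∀ v w, T.square'.Adj v w → c v ≠ c w) ∧
      ∀ v w, T.Adj v w →
        (s : ℤ) + 1 ≤ |c v - c w| ∧
        |c v - c w| ≤ (s : ℤ) + ((T.maxDegree + 1) / 2 : ℕ) :=
  hT.exists_isSpanColouring s (by omega)

theorem tree_square_span_colouring {V : Type*} [Fintype V]
    (T : SimpleGraph V) [DecidableRel T.Adj]
    (hT : T.IsTree) (hE : T.edgeSet.Nonempty) (s : ℕ) :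
    ∃ c : V → ℤ, (∀ v w, T.square'.Adj v w → c v ≠ c w) ∧
      ∀ v w, T.Adj v w →
        (s : ℤ) + 1 ≤ |c v - c w| ∧
        |c v - c w| ≤ (s : ℤ) + ((T.maxDegree + 1) / 2 : ℕ) :=
  tree_square_span_colouring_general T hT s
end

section
/- Let T₁,…,T_d be finite trees, each with at least one edge, and let G = T₁ □ ⋯ □ T_d. Then χ(G²) ≤ 1 + 2 Σ_{i=1}^d ⌈Δ(T_i)/2⌉. -/
/-- The cartesian product of a family of graphs. -/
def boxProdPi {d : ℕ} {V : Fin d → Type*} (G : ∀ i, SimpleGraph (V i)) :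
    SimpleGraph (∀ i, V i) where
  Adj u v := ∃ i, (G i).Adj (u i) (v i) ∧ ∀ j, j ≠ i → u j = v j
  symm := ⟨fun u v => by
    rintro ⟨i, h, hj⟩
    exact ⟨i, h.symm, fun j hji => (hj j hji).symm⟩⟩
  loopless := ⟨fun u => by rintro ⟨i, h, -⟩; exact (G i).loopless.irrefl _ h⟩

open Set Function SimpleGraph

lemma Set.encard_sdiff_singleton_le_encard_sdiff_singleton {α β : Type*} {s : Set α}
    {t : Set β} {a : α} {b : β} (h : s.encard ≤ t.encard) (hab : a ∈ s ∨ b ∉ t) :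
    (s \ {a}).encard ≤ (t \ {b}).encard := by
  rcases hab with ha | hb
  · rw [← ENat.add_le_add_iff_right ENat.one_ne_top, encard_sdiff_singleton_add_one ha]
    simpa using h.trans (encard_le_encard_sdiff_add_encard t {b})
  · rw [sdiff_singleton_eq_self hb]
    exact (encard_le_encard sdiff_subset).trans h

namespace SimpleGraph

variable {V W : Type*} {G : SimpleGraph V} {H : SimpleGraph W} {r v : V}

/-- The parent of `v` in a breadth-first search tree of `G` rooted at `r`. A vertex with no
neighbour closer to `r` (in a connected graph, only `r`) is its own parent. -/
noncomputable def bfsParent (G : SimpleGraph V) (r v : V) : V :=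
  open Classical in
  if h : ∃ w, G.Adj v w ∧ G.dist r w < G.dist r v then h.choose else v

lemma adj_bfsParent_and_dist_lt (h : G.bfsParent r v ≠ v) :
    G.Adj v (G.bfsParent r v) ∧ G.dist r (G.bfsParent r v) < G.dist r v := by
  unfold bfsParent at h ⊢
  split_ifs at h ⊢ with hex
  · exact hex.choose_spec
  · exact absurd rfl h

lemma adj_bfsParent (h : G.bfsParent r v ≠ v) : G.Adj v (G.bfsParent r v) :=
  (adj_bfsParent_and_dist_lt h).1

lemma dist_bfsParent_lt (h : G.bfsParent r v ≠ v) : G.dist r (G.bfsParent r v) < G.dist r v :=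
  (adj_bfsParent_and_dist_lt h).2

lemma dist_bfsParent_le : G.dist r (G.bfsParent r v) ≤ G.dist r v := by
  by_cases h : G.bfsParent r v = v
  · rw [h]
  · exact (dist_bfsParent_lt h).le

lemma bfsParent_ne_self_of_adj {w : V} (hadj : G.Adj v w) (hlt : G.dist r w < G.dist r v) :
    G.bfsParent r v ≠ v := by
  have hex : ∃ w, G.Adj v w ∧ G.dist r w < G.dist r v := ⟨w, hadj, hlt⟩
  intro h
  unfold bfsParent at h
  rw [dif_pos hex] at h
  exact hex.choose_spec.1.ne h.symm

lemma Walk.notMem_support_of_length_lt_dist {w : V} (q : G.Walk r w)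
    (hq : q.length < G.dist r v) : v ∉ q.support := by
  classical
  intro hv
  have := dist_le (q.takeUntil v hv)
  have := q.length_takeUntil_le_length hv
  omega

lemma IsTree.eq_of_adj_of_dist_lt (hT : G.IsTree) {w₁ w₂ : V} (h₁ : G.Adj w₁ v)
    (h₂ : G.Adj w₂ v) (hd₁ : G.dist r w₁ < G.dist r v) (hd₂ : G.dist r w₂ < G.dist r v) :
    w₁ = w₂ := by
  obtain ⟨q₁, hq₁, hl₁⟩ := hT.connected.exists_path_of_dist r w₁
  obtain ⟨q₂, hq₂, hl₂⟩ := hT.connected.exists_path_of_dist r w₂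
  have := hT.isAcyclic.subsingleton_path r v
  have hpath : (⟨_, hq₁.concat (q₁.notMem_support_of_length_lt_dist (hl₁ ▸ hd₁)) h₁⟩ : G.Path r v)
      = ⟨_, hq₂.concat (q₂.notMem_support_of_length_lt_dist (hl₂ ▸ hd₂)) h₂⟩ :=
    Subsingleton.elim _ _
  exact (Walk.concat_inj (congrArg Subtype.val hpath)).1

lemma IsTree.eq_bfsParent_of_adj (hT : G.IsTree) {w : V} (hadj : G.Adj v w)
    (hlt : G.dist r w < G.dist r v) : w = G.bfsParent r v := by
  have hne := bfsParent_ne_self_of_adj hadj hlt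
  exact hT.eq_of_adj_of_dist_lt hadj.symm (adj_bfsParent hne).symm hlt (dist_bfsParent_lt hne)

def bfsChildren (G : SimpleGraph V) (r p : V) : Set V := {c | G.Adj p c ∧ G.bfsParent r c = p}

lemma IsTree.eq_bfsParent_or_mem_bfsChildren (hT : G.IsTree) {a : V} (hadj : G.Adj v a) :
    a = G.bfsParent r v ∨ a ∈ G.bfsChildren r v := by
  rcases hT.dist_eq_dist_add_one_of_adj r hadj with h | h
  · exact Or.inl (hT.eq_bfsParent_of_adj hadj (by omega))
  · exact Or.inr ⟨hadj, (hT.eq_bfsParent_of_adj hadj.symm (by omega)).symm⟩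

lemma bfsParent_ne_of_mem_bfsChildren {p c : V} (hc : c ∈ G.bfsChildren r p) :
    G.bfsParent r c ≠ c :=
  hc.2 ▸ hc.1.ne

lemma bfsChildren_subset (p : V) :
    G.bfsChildren r p ⊆ G.neighborSet p \ {G.bfsParent r p} := by
  rintro c ⟨hpc, hcp⟩
  refine ⟨hpc, fun (hc : c = G.bfsParent r p) => ?_⟩
  have hp : G.bfsParent r p ≠ p := hc ▸ hpc.ne'
  have hlt := dist_bfsParent_lt hp
  have hle : G.dist r (G.bfsParent r c) ≤ G.dist r c := dist_bfsParent_le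
  rw [hcp, hc] at hle
  omega

/-- `g p x y` is the map used on the children of `p` once `p` is sent to `x` and its parent
to `y`. -/
noncomputable def bfsLift (G : SimpleGraph V) (r : V) (w₀ : W) (g : V → W → W → V → W)
    (v : V) : W :=
  open Classical in
  if hv : G.bfsParent r v = v then w₀
  else
    have := dist_bfsParent_lt hv
    have := dist_bfsParent_le.trans_lt this
    g (G.bfsParent r v) (G.bfsLift r w₀ g (G.bfsParent r v))
      (G.bfsLift r w₀ g (G.bfsParent r (G.bfsParent r v))) v
termination_by G.dist r v

lemma bfsLift_of_mem_bfsChildren {w₀ : W} {g : V → W → W → V → W} {p c : V}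
    (hc : c ∈ G.bfsChildren r p) :
    G.bfsLift r w₀ g c = g p (G.bfsLift r w₀ g p) (G.bfsLift r w₀ g (G.bfsParent r p)) c := by
  rw [bfsLift, dif_neg (bfsParent_ne_of_mem_bfsChildren hc)]
  dsimp only
  rw [hc.2]

lemma encard_bfsChildren_le [Fintype V] [DecidableRel G.Adj]
    (hH : ∀ w, (G.maxDegree : ℕ∞) ≤ (H.neighborSet w).encard) (f : V → W) (p : V) :
    (G.bfsChildren r p).encard ≤ (H.neighborSet (f p) \ {f (G.bfsParent r p)}).encard := by
  refine (encard_le_encard (bfsChildren_subset p)).trans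
    (encard_sdiff_singleton_le_encard_sdiff_singleton ?_ ?_)
  · rw [← coe_neighborFinset, encard_coe_eq_coe_finsetCard, card_neighborFinset_eq_degree]
    exact (Nat.cast_le.mpr (G.degree_le_maxDegree p)).trans (hH (f p))
  · by_cases hp : G.bfsParent r p = p
    -- the root is its own parent, and `f r` is not a neighbour of itself
    · rw [hp]
      exact Or.inr H.notMem_neighborSet_self
    · exact Or.inl (adj_bfsParent hp)

lemma IsTree.map_adj_and_injOn_of_bfsChildren (hG : G.IsTree) {f : V → W}
    (hchild : ∀ p, MapsTo f (G.bfsChildren r p) (H.neighborSet (f p) \ {f (G.bfsParent r p)}))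
    (hinj : ∀ p, InjOn f (G.bfsChildren r p)) :
    (∀ ⦃a b⦄, G.Adj a b → H.Adj (f a) (f b)) ∧ ∀ p, InjOn f (G.neighborSet p) := by
  refine ⟨fun a b hab => ?_, fun p a ha b hb hab => ?_⟩
  · rcases hG.eq_bfsParent_or_mem_bfsChildren (r := r) hab with rfl | hb
    · exact (hchild _ ⟨hab.symm, rfl⟩).1.symm
    · exact (hchild a hb).1
  · rcases hG.eq_bfsParent_or_mem_bfsChildren (r := r) ha with rfl | ha <;>
      rcases hG.eq_bfsParent_or_mem_bfsChildren (r := r) hb with rfl | hb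
    · rfl
    · exact absurd hab.symm (hchild p hb).2
    · exact absurd hab (hchild p ha).2
    · exact hinj p ha hb hab

theorem IsTree.exists_hom_injOn_neighborSet [Fintype V] [DecidableRel G.Adj] [Nonempty W]
    (hG : G.IsTree) (hH : ∀ w, (G.maxDegree : ℕ∞) ≤ (H.neighborSet w).encard) :
    ∃ f : G →g H, ∀ v, InjOn f (G.neighborSet v) := by
  obtain ⟨r⟩ := hG.connected.nonempty
  have hchoice : ∀ p x y, ∃ g : V → W,
      (G.bfsChildren r p).encard ≤ (H.neighborSet x \ {y}).encard →
        MapsTo g (G.bfsChildren r p) (H.neighborSet x \ {y}) ∧ InjOn g (G.bfsChildren r p) := by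
    intro p x y
    by_cases hle : (G.bfsChildren r p).encard ≤ (H.neighborSet x \ {y}).encard
    · obtain ⟨g, hmaps, hinj⟩ := (toFinite _).exists_injOn_of_encard_le hle
      exact ⟨g, fun _ => ⟨hmaps, hinj⟩⟩
    · exact ⟨fun _ => x, fun h => absurd h hle⟩
  choose g hg using hchoice
  obtain ⟨w₀⟩ := ‹Nonempty W›
  have hlift p := hg p _ _ (encard_bfsChildren_le hH (G.bfsLift r w₀ g) p)
  have hchild p : EqOn (G.bfsLift r w₀ g) (g p (G.bfsLift r w₀ g p)
      (G.bfsLift r w₀ g (G.bfsParent r p))) (G.bfsChildren r p) :=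
    fun _ hc => bfsLift_of_mem_bfsChildren hc
  obtain ⟨hhom, hinj⟩ := hG.map_adj_and_injOn_of_bfsChildren (r := r)
    (fun p => ((hlift p).1).congr (hchild p).symm) (fun p => ((hlift p).2).congr (hchild p).symm)
  exact ⟨⟨_, fun hab => hhom hab⟩, hinj⟩

lemma abs_sub_mem_of_circulantGraph_adj {B : Set ℤ} (hB : B ⊆ Ioi 0) {x y : ℤ}
    (h : (circulantGraph B).Adj x y) : |x - y| ∈ B := by
  rcases h.2 with h | h
  · rwa [abs_of_pos (hB h)]
  · rwa [abs_sub_comm, abs_of_pos (hB h)]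

lemma encard_neighborSet_circulantGraph_Ioc (a k : ℕ) (x : ℤ) :
    ((circulantGraph (Ioc (a : ℤ) (a + k))).neighborSet x).encard = 2 * k := by
  have hN : (circulantGraph (Ioc (a : ℤ) (a + k))).neighborSet x =
      Ioc (x + a) (x + a + k) ∪ Ico (x - a - k) (x - a) := by
    ext y
    simp only [mem_neighborSet, circulantGraph_adj, mem_Ioc, mem_union, mem_Ico]
    omega
  have hdisj : Disjoint (Ioc (x + a) (x + a + k)) (Ico (x - a - k) (x - a)) :=
    Set.disjoint_left.mpr fun y hy hy' => by simp only [mem_Ioc, mem_Ico] at hy hy'; omega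
  rw [hN, encard_union_eq hdisj, ← Finset.coe_Ioc, ← Finset.coe_Ico,
    encard_coe_eq_coe_finsetCard, encard_coe_eq_coe_finsetCard, Int.card_Ioc, Int.card_Ico]
  rw [show x + a + k - (x + a) = (k : ℤ) by ring, show x - a - (x - a - k) = (k : ℤ) by ring,
    Int.toNat_natCast, two_mul]

end SimpleGraph

section Blocks

variable {ι : Type*} [LinearOrder ι] [LocallyFiniteOrderBot ι] (k : ι → ℕ)

def blockIoc (i : ι) : Set ℤ :=
  Ioc ((∑ j ∈ Finset.Iio i, k j : ℕ) : ℤ) ((∑ j ∈ Finset.Iio i, k j : ℕ) + k i)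

lemma blockIoc_subset [Fintype ι] (i : ι) : blockIoc k i ⊆ Ioc 0 (∑ j, k j : ℕ) := by
  have : ∑ j ∈ Finset.Iic i, k j ≤ ∑ j, k j := Finset.sum_le_sum_of_subset (Finset.subset_univ _)
  rw [← Finset.sum_Iio_add_eq_sum_Iic] at this
  intro x ⟨h₁, h₂⟩
  constructor <;> omega

lemma pairwise_disjoint_blockIoc : Pairwise (Disjoint on blockIoc k) := by
  have of_lt {i j : ι} (hij : i < j) : Disjoint (blockIoc k i) (blockIoc k j) := by
    have : ∑ l ∈ Finset.Iic i, k l ≤ ∑ l ∈ Finset.Iio j, k l :=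
      Finset.sum_le_sum_of_subset fun l hl =>
        Finset.mem_Iio.mpr ((Finset.mem_Iic.mp hl).trans_lt hij)
    rw [← Finset.sum_Iio_add_eq_sum_Iic] at this
    exact Set.disjoint_left.mpr fun x ⟨_, h₁⟩ ⟨h₂, _⟩ => by omega
  intro i j hij
  rcases hij.lt_or_gt with h | h
  · exact of_lt h
  · exact (of_lt h).symm

end Blocks

lemma Fintype.sum_sub_sum_eq_of_forall_ne {ι M : Type*} [Fintype ι] [AddCommGroup M]
    {V : ι → Type*} (c : ∀ i, V i → M) {u w : ∀ i, V i} {i : ι} (h : ∀ j, j ≠ i → u j = w j) :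
    ∑ j, c j (u j) - ∑ j, c j (w j) = c i (u i) - c i (w i) := by
  rw [← Finset.sum_sub_distrib]
  exact Finset.sum_eq_single i (fun j _ hj => by rw [h j hj, sub_self]) (by simp)

lemma SimpleGraph.colorable_of_abs_sub_lt_s5 {V : Type*} {G : SimpleGraph V} (c : V → ℤ) {N : ℕ}
    (hN : 0 < N) (hc : ∀ ⦃u v⦄, G.Adj u v → c u ≠ c v ∧ |c u - c v| < N) : G.Colorable N := by
  have : NeZero N := ⟨hN.ne'⟩
  have hcol := (Coloring.mk (fun v => (c v : ZMod N)) fun {u v} huv heq => by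
    obtain ⟨hne, hlt⟩ := hc huv
    rw [ZMod.intCast_eq_intCast_iff_dvd_sub] at heq
    rw [abs_sub_comm] at hlt
    exact hne (sub_eq_zero.mp (Int.eq_zero_of_abs_lt_dvd heq hlt)).symm).colorable
  rwa [ZMod.card] at hcol

section BoxProduct

variable {d : ℕ} {V : Fin d → Type*} {T : ∀ i, SimpleGraph (V i)} {B : Fin d → Set ℤ} {K : ℤ}

theorem sum_ne_and_abs_sub_le_of_square'_boxProdPi_adj (hB : ∀ i, B i ⊆ Ioc 0 K)
    (hBdisj : Pairwise (Disjoint on B)) (f : ∀ i, T i →g circulantGraph (B i))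
    (hf : ∀ i p, InjOn (f i) ((T i).neighborSet p)) {u v : ∀ i, V i}
    (huv : (boxProdPi T).square'.Adj u v) :
    ∑ i, f i (u i) ≠ ∑ i, f i (v i) ∧ |∑ i, f i (u i) - ∑ i, f i (v i)| ≤ 2 * K := by
  have hedge {i a b} (h : (T i).Adj a b) : |f i a - f i b| ∈ B i :=
    abs_sub_mem_of_circulantGraph_adj (fun _ hx => (hB i hx).1) ((f i).map_adj h)
  have hsub {u w : ∀ i, V i} {i} (h : ∀ j, j ≠ i → u j = w j) :=
    Fintype.sum_sub_sum_eq_of_forall_ne (fun i => ⇑(f i)) h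
  obtain ⟨hne, ⟨i, hi, hi'⟩ | ⟨w, ⟨i, hi, hi'⟩, ⟨j, hj, hj'⟩⟩⟩ := huv
  · rw [← sub_ne_zero, hsub hi']
    obtain ⟨hpos, hle⟩ := hB i (hedge hi)
    exact ⟨abs_pos.mp hpos, by linarith⟩
  have hsplit : ∑ i, f i (u i) - ∑ i, f i (v i) =
      (f i (u i) - f i (w i)) + (f j (w j) - f j (v j)) := by
    rw [← hsub hi', ← hsub hj']
    ring
  obtain ⟨hx₀, hxK⟩ := hB i (hedge hi)
  obtain ⟨hy₀, hyK⟩ := hB j (hedge hj)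
  refine ⟨?_, ?_⟩
  · rw [← sub_ne_zero, hsplit]
    by_cases hij : i = j
    · subst hij
      have hne_i : u i ≠ v i := fun h => hne <| funext fun l => by
        by_cases hl : l = i
        · exact hl ▸ h
        · rw [hi' l hl, hj' l hl]
      rw [sub_add_sub_cancel, sub_ne_zero]
      exact fun h => hne_i (hf i (w i) hi.symm hj h)
    · intro h0
      refine (hBdisj hij).ne_of_mem (hedge hi) (hedge hj) ?_
      rw [eq_neg_of_add_eq_zero_left h0, abs_neg]
  · rw [hsplit]
    linarith [abs_add_le (f i (u i) - f i (w i)) (f j (w j) - f j (v j))]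

end BoxProduct

theorem trees_product_square_chromatic_upper_general {d : ℕ} {V : Fin d → Type*}
    [∀ i, Fintype (V i)] (T : ∀ i, SimpleGraph (V i))
    [∀ i, DecidableRel (T i).Adj]
    (hT : ∀ i, (T i).IsTree) :
    (boxProdPi T).square'.chromaticNumber ≤
      ((1 + 2 * ∑ i, ((T i).maxDegree + 1) / 2 : ℕ) : ℕ∞) := by
  set k : Fin d → ℕ := fun i => ((T i).maxDegree + 1) / 2
  have hlift i : ∃ f : T i →g circulantGraph (blockIoc k i),
      ∀ p, InjOn f ((T i).neighborSet p) :=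
    (hT i).exists_hom_injOn_neighborSet fun x => by
      rw [blockIoc, encard_neighborSet_circulantGraph_Ioc]
      exact_mod_cast (by omega : (T i).maxDegree ≤ 2 * (((T i).maxDegree + 1) / 2))
  choose f hf using hlift
  refine Colorable.chromaticNumber_le (colorable_of_abs_sub_lt_s5 (fun u => ∑ i, f i (u i))
    (by omega) fun u v huv => ?_)
  obtain ⟨hne, hle⟩ := sum_ne_and_abs_sub_le_of_square'_boxProdPi_adj (blockIoc_subset k)
    (pairwise_disjoint_blockIoc k) f hf huv
  exact ⟨hne, by push_cast at hle ⊢; linarith⟩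

theorem trees_product_square_chromatic_upper {d : ℕ} {V : Fin d → Type*}
    [∀ i, Fintype (V i)] (T : ∀ i, SimpleGraph (V i))
    [∀ i, DecidableRel (T i).Adj]
    (hT : ∀ i, (T i).IsTree) (hE : ∀ i, (T i).edgeSet.Nonempty) :
    (boxProdPi T).square'.chromaticNumber ≤
      ((1 + 2 * ∑ i, ((T i).maxDegree + 1) / 2 : ℕ) : ℕ∞) :=
  trees_product_square_chromatic_upper_general T hT
end

section
/- Let T₁ and T₂ be finite trees with at least one edge such that Δ(T₁) and Δ(T₂) are both even. Then χ((T₁ □ T₂)²) = 1 + Δ(T₁) + Δ(T₂). -/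
/-!
Lower bound: a vertex of maximum degree of `T₁ □ T₂` together with its `Δ(T₁) + Δ(T₂)`
neighbours is a clique in the square.

Upper bound: write `Δ(Tᵢ) = 2 mᵢ`. A locally injective homomorphism `G →g H` is also a
homomorphism of the squares, and a finite tree of maximum degree `d` maps locally injectively into
any graph of minimum degree at least `d` (extend over a leaf). So `T₁` maps into the circulant
graph on `ℤ` with jumps `[1, m₁]` and `T₂` into the one with jumps `[m₁ + 1, m₁ + m₂]`. As the two
sets of jumps and their negatives are disjoint, `(u, v) ↦ f₁ u + f₂ v` is locally injective from
`T₁ □ T₂` into the circulant graph with jumps `[1, m₁ + m₂]`, whose square is coloured by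
reduction modulo `2 (m₁ + m₂) + 1`.
-/

lemma Int.encard_Icc (a b : ℤ) : (Set.Icc a b).encard = (b + 1 - a).toNat := by
  rw [← Finset.coe_Icc, Set.encard_coe_eq_coe_finsetCard, Int.card_Icc]

namespace SimpleGraph

variable {V W α : Type*}

def Hom.IsLocallyInjective {G : SimpleGraph V} {H : SimpleGraph α} (f : G →g H) : Prop :=
  ∀ v, Set.InjOn f (G.neighborSet v)

section Trees

variable {T : SimpleGraph V} {H : SimpleGraph α}

lemma encard_neighborSet_induce_le (s : Set V) (x : s) :
    ((T.induce s).neighborSet x).encard ≤ (T.neighborSet x).encard := by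
  rw [← Subtype.val_injective.encard_image]
  exact Set.encard_le_encard (Set.image_subset_iff.2 fun _ hy => hy)

lemma exists_adj_notMem_image_neighborSet_induce [Finite V] {v w : V} (hvw : T.Adj v w)
    (g : T.induce {v}ᶜ →g H)
    (hdeg : (T.neighborSet w).encard ≤ (H.neighborSet (g ⟨w, hvw.ne'⟩)).encard) :
    ∃ b ∈ H.neighborSet (g ⟨w, hvw.ne'⟩),
      b ∉ g '' (T.induce {v}ᶜ).neighborSet ⟨w, hvw.ne'⟩ := by
  have hsub : Subtype.val '' (T.induce {v}ᶜ).neighborSet ⟨w, hvw.ne'⟩ ⊂ T.neighborSet w :=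
    (Set.ssubset_iff_of_subset (Set.image_subset_iff.2 fun _ hy => hy)).2
      ⟨v, hvw.symm, fun ⟨y, _, (hyv : y.1 = v)⟩ => y.2 hyv⟩
  have hlt := calc
    (g '' (T.induce {v}ᶜ).neighborSet ⟨w, hvw.ne'⟩).encard
        ≤ ((T.induce {v}ᶜ).neighborSet ⟨w, hvw.ne'⟩).encard := Set.encard_image_le _ _
    _ = (Subtype.val '' (T.induce {v}ᶜ).neighborSet ⟨w, hvw.ne'⟩).encard :=
      (Subtype.val_injective.encard_image _).symm
    _ < (T.neighborSet w).encard := (Set.toFinite _).encard_lt_encard hsub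
    _ ≤ (H.neighborSet (g ⟨w, hvw.ne'⟩)).encard := hdeg
  exact Set.not_subset.1 fun h => (Set.encard_le_encard h).not_gt hlt

lemma exists_isLocallyInjective_hom_of_leaf [Finite V] {v w : V}
    (hvw : ∀ u, T.Adj v u ↔ u = w) (hwv : w ≠ v) (g : T.induce {v}ᶜ →g H)
    (hg : g.IsLocallyInjective)
    (hdeg : (T.neighborSet w).encard ≤ (H.neighborSet (g ⟨w, hwv⟩)).encard) :
    ∃ f : T →g H, f.IsLocallyInjective := by
  classical
  obtain ⟨b, hb, hb'⟩ := exists_adj_notMem_image_neighborSet_induce ((hvw w).2 rfl) g hdeg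
  have hadj_v : ∀ {x}, T.Adj x v → x = w := fun h => (hvw _).1 h.symm
  let f : V → α := fun x => if h : x = v then b else g ⟨x, h⟩
  have hf_v : f v = b := dif_pos rfl
  have hf_ne : ∀ {x} (hx : x ≠ v), f x = g ⟨x, hx⟩ := fun hx => dif_neg hx
  refine ⟨⟨f, fun {x y} hxy => ?_⟩, fun x y hy y' hy' (hyy' : f y = f y') => ?_⟩
  · by_cases hx : x = v <;> by_cases hy : y = v
    · exact absurd (hx.trans hy.symm) hxy.ne
    · subst hx; obtain rfl := (hvw y).1 hxy
      rw [hf_v, hf_ne hy]; exact hb.symm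
    · subst hy; obtain rfl := hadj_v hxy
      rw [hf_v, hf_ne hx]; exact hb
    · rw [hf_ne hx, hf_ne hy]; exact g.map_rel hxy
  · have mixed : ∀ {y y'}, T.Adj x y → T.Adj x y' → y = v → (hy' : y' ≠ v) → f y ≠ f y' := by
      rintro y y' hy hy' rfl hy'v heq
      obtain rfl := hadj_v hy
      exact hb' ⟨⟨y', hy'v⟩, hy', by rw [← hf_ne hy'v, ← heq, hf_v]⟩
    by_cases hyv : y = v <;> by_cases hy'v : y' = v
    · exact hyv.trans hy'v.symm
    · exact absurd hyy' (mixed hy hy' hyv hy'v)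
    · exact absurd hyy'.symm (mixed hy' hy hy'v hyv)
    · by_cases hx : x = v
      · subst hx; exact ((hvw y).1 hy).trans ((hvw y').1 hy').symm
      · rw [hf_ne hyv, hf_ne hy'v] at hyy'
        exact congrArg Subtype.val (hg ⟨x, hx⟩ hy hy' hyy')

theorem IsTree.exists_isLocallyInjective_hom [Finite V] [Nonempty α] (hT : T.IsTree)
    (hdeg : ∀ v a, (T.neighborSet v).encard ≤ (H.neighborSet a).encard) :
    ∃ f : T →g H, f.IsLocallyInjective := by
  induction hn : Nat.card V generalizing V with
  | zero =>
    have := hT.connected.nonempty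
    exact absurd hn Nat.card_pos.ne'
  | succ n ih =>
    classical
    have := Fintype.ofFinite V
    rcases subsingleton_or_nontrivial V with hV | hV
    · exact ⟨⟨fun _ => Classical.arbitrary α, fun h => absurd (Subsingleton.elim _ _) h.ne⟩,
        fun _ x _ y _ _ => Subsingleton.elim x y⟩
    obtain ⟨v, hv⟩ := hT.exists_vert_degree_one_of_nontrivial
    obtain ⟨w, hvw, hw_unique⟩ := degree_eq_one_iff_existsUnique_adj.1 hv
    have hwv : w ≠ v := hvw.ne'
    have hT' : (T.induce {v}ᶜ).IsTree :=
      ⟨hT.connected.induce_compl_singleton_of_degree_eq_one hv, hT.isAcyclic.induce _⟩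
    obtain ⟨g, hg⟩ := ih hT'
      (fun x a => (encard_neighborSet_induce_le _ x).trans (hdeg _ a))
      (by rw [Nat.card_coe_set_eq, Set.ncard_compl, Set.ncard_singleton, hn]; rfl)
    exact exists_isLocallyInjective_hom_of_leaf
      (fun u => ⟨hw_unique u, fun h => h ▸ hvw⟩) hwv g hg (hdeg _ _)

end Trees

section Square

variable {G : SimpleGraph V} {H : SimpleGraph α}

lemma isClique_square'_insert_neighborSet (x : V) :
    G.square'.IsClique (insert x (G.neighborSet x)) := by
  rintro y (rfl | hy) z (rfl | hz) hyz
  · exact absurd rfl hyz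
  · exact ⟨hyz, Or.inl hz⟩
  · exact ⟨hyz, Or.inl hy.symm⟩
  · exact ⟨hyz, Or.inr ⟨x, hy.symm, hz⟩⟩

lemma degree_add_one_le_chromaticNumber_square' (x : V) [Fintype (G.neighborSet x)] :
    ((G.degree x + 1 : ℕ) : ℕ∞) ≤ G.square'.chromaticNumber := by
  classical
  have hclique : G.square'.IsClique (insert x (G.neighborFinset x) : Finset V) := by
    rw [Finset.coe_insert, coe_neighborFinset]
    exact isClique_square'_insert_neighborSet x
  have := hclique.card_le_chromaticNumber
  rwa [Finset.card_insert_of_notMem (by simp), card_neighborFinset_eq_degree] at this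

def Hom.square' (f : G →g H) (hf : f.IsLocallyInjective) : G.square' →g H.square' where
  toFun := f
  map_rel' := by
    rintro x y ⟨hxy, hadj | ⟨z, hxz, hzy⟩⟩
    · exact ⟨(f.map_rel hadj).ne, Or.inl (f.map_rel hadj)⟩
    · exact ⟨fun h => hxy (hf z hxz.symm hzy h), Or.inr ⟨f z, f.map_rel hxz, f.map_rel hzy⟩⟩

end Square

section Circulant

variable {A : Type*} [AddCommGroup A]

lemma sub_mem_of_adj_circulantGraph {s : Set A} {a b : A} (h : (circulantGraph s).Adj a b) :
    b - a ∈ s ∪ -s := by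
  rcases h.2 with h | h
  · exact Or.inr (by rwa [Set.mem_neg, neg_sub])
  · exact Or.inl h

lemma circulantGraph_adj_iff_of_disjoint {s : Set A} (hs : Disjoint s (-s)) {a b : A} :
    (circulantGraph s).Adj a b ↔ b - a ∈ s ∪ -s := by
  refine ⟨sub_mem_of_adj_circulantGraph, fun h => ⟨fun hab => ?_, ?_⟩⟩
  · rw [hab, sub_self, Set.mem_union, Set.mem_neg, neg_zero, or_self] at h
    exact Set.disjoint_left.1 hs h (by rwa [Set.mem_neg, neg_zero])
  · rcases h with h | h
    · exact Or.inr h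
    · exact Or.inl (by rwa [Set.mem_neg, neg_sub] at h)

lemma neighborSet_circulantGraph {s : Set A} (hs : Disjoint s (-s)) (a : A) :
    (circulantGraph s).neighborSet a = (a + ·) '' (s ∪ -s) := by
  ext b
  rw [mem_neighborSet, circulantGraph_adj_iff_of_disjoint hs]
  refine ⟨fun h => ⟨b - a, h, add_sub_cancel a b⟩, ?_⟩
  rintro ⟨t, ht, rfl⟩
  rwa [add_sub_cancel_left]

lemma circulantGraph_mono {s t : Set A} (h : s ⊆ t) : circulantGraph s ≤ circulantGraph t :=
  fun _ _ hab => ⟨hab.1, hab.2.imp (@h _) (@h _)⟩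

lemma encard_neighborSet_circulantGraph {s : Set A} (hs : Disjoint s (-s)) (a : A) :
    ((circulantGraph s).neighborSet a).encard = 2 * s.encard := by
  rw [neighborSet_circulantGraph hs, (add_right_injective a).encard_image,
    Set.encard_union_eq hs, Set.encard_neg, two_mul]

variable {G₁ : SimpleGraph V} {G₂ : SimpleGraph W} {s₁ s₂ : Set A}

def Hom.boxProdAdd (f₁ : G₁ →g circulantGraph s₁) (f₂ : G₂ →g circulantGraph s₂) :
    (G₁ □ G₂) →g circulantGraph (s₁ ∪ s₂) where
  toFun x := f₁ x.1 + f₂ x.2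
  map_rel' := by
    rintro ⟨u, v⟩ ⟨u', v'⟩ (⟨h, rfl : v = v'⟩ | ⟨h, rfl : u = u'⟩)
    · exact circulantGraph_mono Set.subset_union_left
        (circulantGraph_adj_translate.2 (f₁.map_rel h))
    · rw [add_comm (f₁ u), add_comm (f₁ u)]
      exact circulantGraph_mono Set.subset_union_right
        (circulantGraph_adj_translate.2 (f₂.map_rel h))

lemma Hom.isLocallyInjective_boxProdAdd (hs : Disjoint (s₁ ∪ -s₁) (s₂ ∪ -s₂))
    {f₁ : G₁ →g circulantGraph s₁} {f₂ : G₂ →g circulantGraph s₂}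
    (hf₁ : f₁.IsLocallyInjective) (hf₂ : f₂.IsLocallyInjective) :
    (f₁.boxProdAdd f₂).IsLocallyInjective := by
  have mixed : ∀ {a b c d}, G₁.Adj a b → G₂.Adj c d → f₁ b + f₂ c ≠ f₁ a + f₂ d := by
    intro a b c d hab hcd h
    have hsub : f₁ b - f₁ a = f₂ d - f₂ c := by
      rw [sub_eq_sub_iff_add_eq_add, h, add_comm]
    exact Set.disjoint_left.1 hs (sub_mem_of_adj_circulantGraph (f₁.map_rel hab))
      (hsub ▸ sub_mem_of_adj_circulantGraph (f₂.map_rel hcd))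
  rintro ⟨u, v⟩ ⟨u₁, v₁⟩ h₁ ⟨u₂, v₂⟩ h₂ (heq : f₁ u₁ + f₂ v₁ = f₁ u₂ + f₂ v₂)
  simp only [mem_neighborSet, boxProd_adj] at h₁ h₂
  rcases h₁ with ⟨h₁, rfl⟩ | ⟨h₁, rfl⟩ <;> rcases h₂ with ⟨h₂, rfl⟩ | ⟨h₂, rfl⟩
  · rw [add_left_inj] at heq
    rw [hf₁ u h₁ h₂ heq]
  · exact absurd heq (mixed h₁ h₂)
  · exact absurd heq.symm (mixed h₂ h₁)
  · rw [add_right_inj] at heq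
    rw [hf₂ v h₁ h₂ heq]

end Circulant

section Int

lemma colorable_square'_circulantGraph_int {s : Set ℤ} {m : ℕ} (hs : ∀ t ∈ s, |t| ≤ m) :
    (circulantGraph s).square'.Colorable (2 * m + 1) := by
  have hadj : ∀ {a b}, (circulantGraph s).Adj a b → |b - a| ≤ m := fun h => by
    rcases sub_mem_of_adj_circulantGraph h with h | h
    · exact hs _ h
    · rw [← abs_neg]
      exact hs _ h
  have hvalid : ∀ {a b : ℤ}, (circulantGraph s).square'.Adj a b →
      (a : ZMod (2 * m + 1)) ≠ b := by
    rintro a b ⟨hab, hdist⟩ hmod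
    have hle : |b - a| ≤ 2 * m := by
      rcases hdist with h | ⟨c, hac, hcb⟩
      · linarith [hadj h, abs_nonneg (b - a)]
      · calc |b - a| = |(b - c) + (c - a)| := by rw [sub_add_sub_cancel]
          _ ≤ |b - c| + |c - a| := abs_add_le _ _
          _ ≤ 2 * m := by linarith [hadj hac, hadj hcb]
    rw [ZMod.intCast_eq_intCast_iff_dvd_sub] at hmod
    exact hab (sub_eq_zero.1 (Int.eq_zero_of_abs_lt_dvd hmod (by push_cast; omega))).symm
  simpa using (Coloring.mk _ hvalid).colorable

lemma IsTree.exists_isLocallyInjective_hom_circulantGraph_Icc [Fintype V] {T : SimpleGraph V}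
    [DecidableRel T.Adj] (hT : T.IsTree) {c m : ℕ} (hΔ : T.maxDegree ≤ 2 * m) :
    ∃ f : T →g circulantGraph (Set.Icc ((c : ℤ) + 1) (c + m)), f.IsLocallyInjective := by
  have hdisj : Disjoint (Set.Icc ((c : ℤ) + 1) (c + m)) (-Set.Icc ((c : ℤ) + 1) (c + m)) := by
    rw [Set.disjoint_left]
    intro t ht ht'
    simp only [Set.mem_neg, Set.mem_Icc] at ht ht'
    omega
  refine hT.exists_isLocallyInjective_hom fun v a => ?_
  rw [encard_neighborSet_circulantGraph hdisj, Int.encard_Icc]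
  calc (T.neighborSet v).encard = T.degree v := by
        simp [← card_neighborFinset_eq_degree, ← Set.encard_coe_eq_coe_finsetCard]
    _ ≤ 2 * m := by exact_mod_cast (T.degree_le_maxDegree v).trans hΔ
    _ = 2 * ((c + m : ℤ) + 1 - (c + 1)).toNat := by congr; omega

end Int

section BoxProd

variable [Fintype V] [Fintype W] {G₁ : SimpleGraph V} {G₂ : SimpleGraph W}
  [DecidableRel G₁.Adj] [DecidableRel G₂.Adj]

theorem IsTree.colorable_square'_boxProd (hG₁ : G₁.IsTree) (hG₂ : G₂.IsTree) {m₁ m₂ : ℕ}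
    (h₁ : G₁.maxDegree ≤ 2 * m₁) (h₂ : G₂.maxDegree ≤ 2 * m₂) :
    (G₁ □ G₂).square'.Colorable (2 * (m₁ + m₂) + 1) := by
  obtain ⟨f₁, hf₁⟩ := hG₁.exists_isLocallyInjective_hom_circulantGraph_Icc (c := 0) h₁
  obtain ⟨f₂, hf₂⟩ := hG₂.exists_isLocallyInjective_hom_circulantGraph_Icc (c := m₁) h₂
  have hF : (f₁.boxProdAdd f₂).IsLocallyInjective :=
    Hom.isLocallyInjective_boxProdAdd (Set.disjoint_left.2 fun t ht ht' => by
      simp only [Set.mem_union, Set.mem_neg, Set.mem_Icc] at ht ht'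
      omega) hf₁ hf₂
  refine (colorable_square'_circulantGraph_int fun t ht => ?_).of_hom
    ((f₁.boxProdAdd f₂).square' hF)
  simp only [Set.mem_union, Set.mem_Icc] at ht
  rw [abs_le]
  omega

theorem maxDegree_add_maxDegree_add_one_le_chromaticNumber_square'_boxProd [Nonempty V]
    [Nonempty W] : ((G₁.maxDegree + G₂.maxDegree + 1 : ℕ) : ℕ∞) ≤
      (G₁ □ G₂).square'.chromaticNumber := by
  obtain ⟨u, hu⟩ := G₁.exists_maximal_degree_vertex
  obtain ⟨w, hw⟩ := G₂.exists_maximal_degree_vertex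
  have := degree_add_one_le_chromaticNumber_square' (G := G₁ □ G₂) (u, w)
  rwa [degree_boxProd, ← hu, ← hw] at this

end BoxProd

end SimpleGraph

theorem two_trees_product_square_chromatic_general {V W : Type*} [Fintype V] [Fintype W]
    (T₁ : SimpleGraph V) (T₂ : SimpleGraph W)
    [DecidableRel T₁.Adj] [DecidableRel T₂.Adj]
    (hT₁ : T₁.IsTree) (hT₂ : T₂.IsTree)
    (h₁ : Even T₁.maxDegree) (h₂ : Even T₂.maxDegree) :
    (T₁ □ T₂).square'.chromaticNumber =
      ((1 + T₁.maxDegree + T₂.maxDegree : ℕ) : ℕ∞) := by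
  obtain ⟨m₁, hm₁⟩ := h₁
  obtain ⟨m₂, hm₂⟩ := h₂
  have := hT₁.connected.nonempty
  have := hT₂.connected.nonempty
  have hk : 1 + T₁.maxDegree + T₂.maxDegree = 2 * (m₁ + m₂) + 1 := by omega
  apply le_antisymm
  · rw [hk]
    exact (hT₁.colorable_square'_boxProd hT₂ (by omega) (by omega)).chromaticNumber_le
  · rw [add_comm 1, add_right_comm]
    exact SimpleGraph.maxDegree_add_maxDegree_add_one_le_chromaticNumber_square'_boxProd

theorem two_trees_product_square_chromatic {V W : Type*} [Fintype V] [Fintype W]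
    (T₁ : SimpleGraph V) (T₂ : SimpleGraph W)
    [DecidableRel T₁.Adj] [DecidableRel T₂.Adj]
    (hT₁ : T₁.IsTree) (hT₂ : T₂.IsTree)
    (hE₁ : T₁.edgeSet.Nonempty) (hE₂ : T₂.edgeSet.Nonempty)
    (h₁ : Even T₁.maxDegree) (h₂ : Even T₂.maxDegree) :
    (T₁ □ T₂).square'.chromaticNumber =
      ((1 + T₁.maxDegree + T₂.maxDegree : ℕ) : ℕ∞) :=
  two_trees_product_square_chromatic_general T₁ T₂ hT₁ hT₂ h₁ h₂
end

section
/- Let T be a finite tree with at least one edge and let G = T □ T (the cartesian product of T with itself). Then χ(G²) ≤ 1 + 4⌈Δ(T)/2⌉ ≤ 2Δ(T) + 3. -/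
/-!
Let `k = ⌈Δ/2⌉` and colour `(a, b)` by `f a + g b` in `ℤ/(4k+1)`, where `f` moves along every edge
of `T` by one of `±1, …, ±k`, `g` by one of `±(k+1), …, ±2k`, and both are injective on every
neighbourhood. Such maps exist because a finite forest has a locally injective homomorphism into
every graph whose degrees are at least its own (detach a leaf, map the rest, then send the leaf to
a neighbour of its parent's image not used yet), and both circulant graphs are `2k`-regular.
Two vertices at distance at most 2 in `T □ T` either differ in one coordinate only, where local
injectivity separates their colours, or differ by one step in each coordinate, where the colours
differ by a small plus a large step, which is never zero modulo `4k + 1`.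
-/

open SimpleGraph

namespace SimpleGraph

variable {V W : Type*}

theorem IsAcyclic.exists_adj_forall_adj_eq [Finite V] {T : SimpleGraph V} (hT : T.IsAcyclic)
    (hne : T ≠ ⊥) : ∃ u v, T.Adj u v ∧ ∀ w, T.Adj v w → w = u := by
  obtain ⟨a, b, hab⟩ : ∃ a b, T.Adj a b := by
    by_contra! h
    exact hne (eq_bot_iff_forall_not_adj.mpr h)
  have : Nonempty V := ⟨a⟩
  obtain ⟨v, _, p, hp, hmax⟩ := Walk.exists_isPath_forall_isPath_length_le_length T
  have hnil : ¬p.Nil := by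
    intro hnil
    have := hmax _ _ _ (Walk.IsPath.of_adj hab)
    simp [Walk.length_eq_zero_iff.mpr hnil] at this
  refine ⟨p.snd, v, (p.adj_snd hnil).symm, fun w hw => hT.eq_snd_of_adj_start hp hw ?_⟩
  by_contra hw'
  have := hmax _ _ _ ((Walk.cons_isPath_iff hw.symm p).mpr ⟨hp, hw'⟩)
  simp at this

theorem exists_hom_injOn_neighborSet_of_leaf {T : SimpleGraph V} {H : SimpleGraph W} {u v : V}
    (huv : T.Adj u v) (hleaf : ∀ w, T.Adj v w → w = u) (φ : T.deleteEdges {s(u, v)} →g H)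
    (hφ : ∀ w, Set.InjOn φ ((T.deleteEdges {s(u, v)}).neighborSet w)) {z : W}
    (hz : H.Adj (φ u) z) (hzφ : z ∉ φ '' (T.deleteEdges {s(u, v)}).neighborSet u) :
    ∃ ψ : T →g H, ∀ w, Set.InjOn ψ (T.neighborSet w) := by
  classical
  have hvu : v ≠ u := huv.ne.symm
  have hdel {a b : V} (hab : T.Adj a b) (ha : a ≠ v) (hb : b ≠ v) :
      (T.deleteEdges {s(u, v)}).Adj a b := by
    refine deleteEdges_adj.mpr ⟨hab, ?_⟩
    rw [Set.mem_singleton_iff, Sym2.eq_iff]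
    tauto
  have hv_isolated (w : V) : v ∉ (T.deleteEdges {s(u, v)}).neighborSet w := fun hw =>
    (deleteEdges_adj.mp hw).2 (by rw [hleaf w (deleteEdges_adj.mp hw).1.symm]; rfl)
  have hψ (w : V) :
      Set.EqOn φ (Function.update φ v z) ((T.deleteEdges {s(u, v)}).neighborSet w) :=
    fun x hx => (Function.update_of_ne (fun h : x = v => hv_isolated w (h ▸ hx)) _ _).symm
  refine ⟨⟨Function.update φ v z, fun {a b} hab => ?_⟩, fun w => ?_⟩
  · rcases eq_or_ne a v with rfl | ha
    · simpa [hleaf b hab, hvu.symm] using hz.symm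
    rcases eq_or_ne b v with rfl | hb
    · simpa [hleaf a hab.symm, hvu.symm] using hz
    simpa [ha, hb] using φ.map_adj (hdel hab ha hb)
  rcases eq_or_ne w v with rfl | hwv
  · exact Set.Subsingleton.injOn (fun a ha b hb => (hleaf a ha).trans (hleaf b hb).symm) _
  rcases eq_or_ne w u with rfl | hwu
  · have hsub : T.neighborSet w ⊆ insert v ((T.deleteEdges {s(w, v)}).neighborSet w) :=
      fun x hx => by
        rcases eq_or_ne x v with rfl | hxv
        · exact Set.mem_insert _ _
        · exact Set.mem_insert_of_mem _ (hdel hx hwv hxv)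
    refine ((Set.injOn_insert (hv_isolated w)).mpr ⟨(hφ w).congr (hψ w), ?_⟩).mono hsub
    rwa [← (hψ w).image_eq, Function.update_self]
  · refine ((hφ w).congr (hψ w)).mono fun x hx => hdel hx hwv ?_
    rintro rfl
    exact hwu (hleaf w hx.symm)

theorem IsAcyclic.exists_hom_injOn_neighborSet [Finite V] [Nonempty W] {T : SimpleGraph V}
    {H : SimpleGraph W} (hT : T.IsAcyclic)
    (hdeg : ∀ v y, (T.neighborSet v).encard ≤ (H.neighborSet y).encard) :
    ∃ φ : T →g H, ∀ v, Set.InjOn φ (T.neighborSet v) := by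
  induction T using WellFoundedLT.induction with | _ T ih
  rcases eq_or_ne T ⊥ with rfl | hne
  · exact ⟨⟨fun _ => Classical.arbitrary W, fun h => h.elim⟩, fun v => by simp⟩
  obtain ⟨u, v, huv, hleaf⟩ := hT.exists_adj_forall_adj_eq hne
  have hle : T.deleteEdges {s(u, v)} ≤ T := deleteEdges_le _
  have hv : v ∉ (T.deleteEdges {s(u, v)}).neighborSet u := fun h => (deleteEdges_adj.mp h).2 rfl
  have hlt : T.deleteEdges {s(u, v)} < T := hle.lt_of_ne fun h => hv (by rw [h]; exact huv)
  obtain ⟨φ, hφ⟩ := ih _ hlt (hT.anti hle) fun w y =>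
    (Set.encard_le_encard (neighborSet_mono hle w)).trans (hdeg w y)
  obtain ⟨z, hz, hzφ⟩ :
      ∃ z ∈ H.neighborSet (φ u), z ∉ φ '' (T.deleteEdges {s(u, v)}).neighborSet u := by
    by_contra! h
    have hssub : (T.deleteEdges {s(u, v)}).neighborSet u ⊂ T.neighborSet u :=
      (Set.ssubset_iff_of_subset (neighborSet_mono hle u)).mpr ⟨v, huv, hv⟩
    exact ((hdeg u (φ u)).trans ((Set.encard_le_encard h).trans (Set.encard_image_le _ _))).not_gt
      ((Set.toFinite _).encard_lt_encard hssub)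
  exact exists_hom_injOn_neighborSet_of_leaf huv hleaf φ hφ hz hzφ

theorem Hom.ne_of_square'_adj {G : SimpleGraph V} {H : SimpleGraph W} (φ : G →g H)
    (hφ : ∀ v, Set.InjOn φ (G.neighborSet v)) {a b : V} (h : G.square'.Adj a b) : φ a ≠ φ b := by
  obtain ⟨hne, hab | ⟨w, haw, hwb⟩⟩ := h
  · exact (φ.map_adj hab).ne
  · exact fun e => hne (hφ w haw.symm hwb e)

theorem square'_boxProd_adj_cases {V₁ V₂ : Type*} {G₁ : SimpleGraph V₁} {G₂ : SimpleGraph V₂}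
    {p q : V₁ × V₂} (h : (G₁ □ G₂).square'.Adj p q) :
    G₁.square'.Adj p.1 q.1 ∧ p.2 = q.2 ∨ G₂.square'.Adj p.2 q.2 ∧ p.1 = q.1 ∨
      G₁.Adj p.1 q.1 ∧ G₂.Adj p.2 q.2 := by
  obtain ⟨hne, hpq | ⟨w, hpw, hwq⟩⟩ := h
  · rcases boxProd_adj.mp hpq with ⟨h1, h2⟩ | ⟨h2, h1⟩
    · exact Or.inl ⟨⟨h1.ne, Or.inl h1⟩, h2⟩
    · exact Or.inr (Or.inl ⟨⟨h2.ne, Or.inl h2⟩, h1⟩)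
  · rcases boxProd_adj.mp hpw with ⟨h1, h2⟩ | ⟨h2, h1⟩ <;>
      rcases boxProd_adj.mp hwq with ⟨h1', h2'⟩ | ⟨h2', h1'⟩
    · exact Or.inl ⟨⟨fun e => hne (Prod.ext e (h2.trans h2')), Or.inr ⟨w.1, h1, h1'⟩⟩,
        h2.trans h2'⟩
    · exact Or.inr (Or.inr ⟨h1'.symm ▸ h1, h2 ▸ h2'⟩)
    · exact Or.inr (Or.inr ⟨h1 ▸ h1', h2'.symm ▸ h2⟩)
    · exact Or.inr (Or.inl ⟨⟨fun e => hne (Prod.ext (h1.trans h1') e), Or.inr ⟨w.2, h2, h2'⟩⟩,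
        h1.trans h1'⟩)

theorem disjoint_circulantGraph {A : Type*} [AddGroup A] {s t : Set A}
    (hst : ∀ a ∈ s, ∀ b ∈ t, a ≠ b ∧ a ≠ -b) : Disjoint (circulantGraph s) (circulantGraph t) := by
  refine disjoint_left.mpr fun x y ⟨_, hs⟩ ⟨_, ht⟩ => ?_
  rcases hs with hs | hs <;> rcases ht with ht | ht
  · exact (hst _ hs _ ht).1 rfl
  · exact (hst _ hs _ ht).2 (neg_sub y x).symm
  · exact (hst _ hs _ ht).2 (neg_sub x y).symm
  · exact (hst _ hs _ ht).1 rfl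

theorem Hom.circulantGraph_adj_sub {A : Type*} [AddGroup A] {s : Set A} {G : SimpleGraph V}
    (φ : G →g circulantGraph s) {a b : V} (h : G.Adj a b) :
    (circulantGraph s).Adj (φ a - φ b) 0 := by
  simpa [sub_eq_add_neg] using
    (circulantGraph_adj_translate (d := -φ b)).mpr (φ.map_adj h)

def boxProdSquareColoring {V₁ V₂ A : Type*} [AddCommGroup A] {G₁ : SimpleGraph V₁}
    {G₂ : SimpleGraph V₂} {s t : Set A} (f : G₁ →g circulantGraph s) (g : G₂ →g circulantGraph t)
    (hf : ∀ v, Set.InjOn f (G₁.neighborSet v)) (hg : ∀ v, Set.InjOn g (G₂.neighborSet v))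
    (hst : Disjoint (circulantGraph s) (circulantGraph t)) : (G₁ □ G₂).square'.Coloring A :=
  Coloring.mk (fun p => f p.1 + g p.2) fun {p q} h => by
    rcases square'_boxProd_adj_cases h with ⟨h1, h2⟩ | ⟨h2, h1⟩ | ⟨h1, h2⟩
    · simpa [h2] using f.ne_of_square'_adj hf h1
    · simpa [h1] using g.ne_of_square'_adj hg h2
    · intro e
      have : f p.1 - f q.1 = g q.2 - g p.2 := sub_eq_sub_iff_add_eq_add.mpr (e.trans (add_comm _ _))
      exact disjoint_left.mp hst _ _ (f.circulantGraph_adj_sub h1)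
        (this ▸ g.circulantGraph_adj_sub h2.symm)

theorem encard_neighborSet_eq_degree {G : SimpleGraph V} (v : V) [Fintype (G.neighborSet v)] :
    (G.neighborSet v).encard = G.degree v := by
  rw [← coe_neighborFinset, Set.encard_coe_eq_coe_finsetCard, card_neighborFinset_eq_degree]

theorem encard_le_encard_neighborSet_circulantGraph {A : Type*} [AddGroup A] {s : Set A}
    (hs : 0 ∉ s) (y : A) : s.encard ≤ ((circulantGraph s).neighborSet y).encard := by
  rw [← (add_left_injective y).encard_image]
  refine Set.encard_le_encard ?_
  rintro _ ⟨a, ha, rfl⟩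
  refine ⟨fun h => hs ?_, Or.inr (by simpa using ha)⟩
  obtain rfl : a = 0 := by simpa using h.symm
  exact ha

end SimpleGraph

noncomputable def intShell (k l : ℕ) : Finset ℤ := Finset.Ioc (k : ℤ) l ∪ Finset.Ico (-(l : ℤ)) (-k)

theorem card_intShell (k l : ℕ) : (intShell k l).card = 2 * (l - k) := by
  rw [intShell, Finset.card_union_of_disjoint, Int.card_Ioc, Int.card_Ico]
  · omega
  · exact Finset.disjoint_left.mpr fun i hi hi' => by
      simp only [Finset.mem_Ioc, Finset.mem_Ico] at hi hi'
      omega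

theorem ZMod.eq_of_intCast_eq {m : ℕ} {i j : ℤ} (h : (i : ZMod m) = j) (hij : i - j < m)
    (hji : j - i < m) : i = j := by
  rw [ZMod.intCast_eq_intCast_iff_dvd_sub] at h
  have := Int.eq_zero_of_abs_lt_dvd h (abs_sub_lt_iff.mpr ⟨hji, hij⟩)
  omega

def zmodShell (m k l : ℕ) : Set (ZMod m) := Int.cast '' (intShell k l : Set ℤ)

theorem encard_zmodShell {m k l : ℕ} (h : 2 * l < m) : (zmodShell m k l).encard = 2 * (l - k) := by
  rw [zmodShell, Set.InjOn.encard_image, Set.encard_coe_eq_coe_finsetCard, card_intShell]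
  · norm_cast
  intro i hi j hj hij
  simp only [intShell, Finset.coe_union, Finset.coe_Ioc, Finset.coe_Ico, Set.mem_union,
    Set.mem_Ioc, Set.mem_Ico] at hi hj
  exact ZMod.eq_of_intCast_eq hij (by omega) (by omega)

theorem zero_notMem_zmodShell {m k l : ℕ} (h : l < m) : 0 ∉ zmodShell m k l := by
  rintro ⟨i, hi, hi0⟩
  simp only [intShell, Finset.coe_union, Finset.coe_Ioc, Finset.coe_Ico, Set.mem_union,
    Set.mem_Ioc, Set.mem_Ico] at hi
  have := ZMod.eq_of_intCast_eq (hi0.trans Int.cast_zero.symm) (by omega) (by omega)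
  omega

theorem zmodShell_ne_and_ne_neg {m k l : ℕ} (h : k + l < m) :
    ∀ a ∈ zmodShell m 0 k, ∀ b ∈ zmodShell m k l, a ≠ b ∧ a ≠ -b := by
  rintro _ ⟨i, hi, rfl⟩ _ ⟨j, hj, rfl⟩
  simp only [intShell, Finset.coe_union, Finset.coe_Ioc, Finset.coe_Ico, Set.mem_union,
    Set.mem_Ioc, Set.mem_Ico] at hi hj
  refine ⟨fun e => ?_, fun e => ?_⟩
  · have := ZMod.eq_of_intCast_eq e (by omega) (by omega)
    omega
  · have := ZMod.eq_of_intCast_eq (e.trans (Int.cast_neg j).symm) (by omega) (by omega)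
    omega

theorem tree_self_product_square_chromatic_general {V : Type*} [Fintype V]
    (T : SimpleGraph V) [DecidableRel T.Adj]
    (hT : T.IsTree) :
    (T □ T).square'.chromaticNumber ≤ ((1 + 4 * ((T.maxDegree + 1) / 2) : ℕ) : ℕ∞) ∧
      (1 + 4 * ((T.maxDegree + 1) / 2) : ℕ) ≤ 2 * T.maxDegree + 3 := by
  refine ⟨?_, by omega⟩
  set k := (T.maxDegree + 1) / 2
  have hdeg (j l : ℕ) (hl : l ≤ 2 * k) (hjl : j + k = l) (v : V) (y : ZMod (1 + 4 * k)) :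
      (T.neighborSet v).encard ≤
        ((circulantGraph (zmodShell (1 + 4 * k) j l)).neighborSet y).encard := by
    refine le_trans ?_ (encard_le_encard_neighborSet_circulantGraph
      (zero_notMem_zmodShell (by omega)) y)
    rw [encard_neighborSet_eq_degree, encard_zmodShell (by omega)]
    exact_mod_cast (T.degree_le_maxDegree v).trans (by omega)
  obtain ⟨f, hf⟩ := hT.isAcyclic.exists_hom_injOn_neighborSet (hdeg 0 k (by omega) (by omega))
  obtain ⟨g, hg⟩ := hT.isAcyclic.exists_hom_injOn_neighborSet (hdeg k (2 * k) le_rfl (by omega))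
  have : NeZero (1 + 4 * k) := ⟨by omega⟩
  have hst := disjoint_circulantGraph
    (zmodShell_ne_and_ne_neg (m := 1 + 4 * k) (k := k) (l := 2 * k) (by omega))
  simpa using (boxProdSquareColoring f g hf hg hst).colorable.chromaticNumber_le

theorem tree_self_product_square_chromatic {V : Type*} [Fintype V]
    (T : SimpleGraph V) [DecidableRel T.Adj]
    (hT : T.IsTree) (hE : T.edgeSet.Nonempty) :
    (T □ T).square'.chromaticNumber ≤ ((1 + 4 * ((T.maxDegree + 1) / 2) : ℕ) : ℕ∞) ∧
      (1 + 4 * ((T.maxDegree + 1) / 2) : ℕ) ≤ 2 * T.maxDegree + 3 :=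
  tree_self_product_square_chromatic_general T hT
end

section
/- Let T be a finite tree with at least 3 vertices, v a leaf of T with unique neighbour w, and s ≥ 0 an integer. Suppose c is a proper colouring of (T−v)² in which every edge of T−v has span in [s+1, s+⌈Δ(T)/2⌉]. Then there exists an integer x with s+1 ≤ |x| ≤ s+⌈Δ(T)/2⌉ such that no neighbour of w in T−v is coloured c(w)+x; moreover, setting c(v) := c(w)+x extends c to a proper colouring of T² in which every edge of T has span in [s+1, s+⌈Δ(T)/2⌉]. -/
theorem Int.exists_abs_bounds_notMem_of_card_lt (s k : ℕ) (B : Finset ℤ) (hB : B.card < 2 * k) :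
    ∃ x : ℤ, ((s : ℤ) + 1 ≤ |x| ∧ |x| ≤ (s : ℤ) + k) ∧ x ∉ B := by
  set S : Finset ℤ := Finset.Icc ((s : ℤ) + 1) (s + k) ∪ Finset.Icc (-((s : ℤ) + k)) (-(s + 1))
  have hS : S.card = 2 * k := by
    rw [Finset.card_union_of_disjoint, Int.card_Icc, Int.card_Icc]
    · omega
    · rw [Finset.disjoint_left]
      intro a ha hb
      simp only [Finset.mem_Icc] at ha hb
      omega
  obtain ⟨x, hxS, hxB⟩ := Finset.exists_mem_notMem_of_card_lt_card (hS ▸ hB)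
  refine ⟨x, ?_, hxB⟩
  simp only [S, Finset.mem_union, Finset.mem_Icc] at hxS
  constructor
  · rw [le_abs]; omega
  · rw [abs_le]; omega

namespace Function

variable {V α : Type*} [DecidableEq V]

def extendAt (v : V) (c : ({v}ᶜ : Set V) → α) (a : α) : V → α :=
  fun u => if h : u = v then a else c ⟨u, h⟩

variable {v : V} {c : ({v}ᶜ : Set V) → α} {a : α}

@[simp]
theorem extendAt_self : extendAt v c a v = a := dif_pos rfl

theorem extendAt_of_ne {u : V} (h : u ∈ ({v}ᶜ : Set V)) : extendAt v c a u = c ⟨u, h⟩ :=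
  dif_neg h

end Function

namespace SimpleGraph

open Function

variable {V : Type*}

theorem rel_extendAt_of_adj {α : Type*} [DecidableEq V] (G : SimpleGraph V) {v : V}
    {c : ({v}ᶜ : Set V) → α} {a : α} {P : α → α → Prop} (hP : ∀ p q, P p q → P q p)
    (hc : ∀ x y : ({v}ᶜ : Set V), G.Adj x y → P (c x) (c y))
    (ha : ∀ y (hy : y ∈ ({v}ᶜ : Set V)), G.Adj v y → P a (c ⟨y, hy⟩)) :
    ∀ x y, G.Adj x y → P (extendAt v c a x) (extendAt v c a y) := by
  have hv : ∀ y, G.Adj v y → P (extendAt v c a v) (extendAt v c a y) := fun y hy => by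
    rw [extendAt_self, extendAt_of_ne hy.ne']
    exact ha y hy.ne' hy
  intro x y hxy
  by_cases hx : x = v
  · subst hx; exact hv y hxy
  by_cases hy : y = v
  · subst hy; exact hP _ _ (hv x hxy.symm)
  rw [extendAt_of_ne hx, extendAt_of_ne hy]
  exact hc _ _ hxy

variable {G : SimpleGraph V} {v w : V}

theorem eq_of_adj_of_degree_eq_one [Fintype (G.neighborSet v)] (hleaf : G.degree v = 1)
    (hvw : G.Adj v w) {y : V} (hvy : G.Adj v y) : y = w :=
  (degree_eq_one_iff_existsUnique_adj.mp hleaf).unique hvy hvw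

theorem square'_adj_induce_compl_of_adj (hv : ∀ y, G.Adj v y → y = w)
    {x y : ({v}ᶜ : Set V)} (hxy : G.square'.Adj x y) : (G.induce {v}ᶜ).square'.Adj x y := by
  obtain ⟨hne, hadj | ⟨m, hxm, hmy⟩⟩ := hxy
  · exact ⟨Subtype.coe_ne_coe.mp hne, Or.inl hadj⟩
  by_cases hm : m = v
  · subst hm
    exact absurd ((hv _ hxm.symm).trans (hv _ hmy).symm) hne
  · exact ⟨Subtype.coe_ne_coe.mp hne, Or.inr ⟨⟨m, hm⟩, hxm, hmy⟩⟩

theorem square'_adj_of_unique_adj (hv : ∀ y, G.Adj v y → y = w) {y : V}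
    (hvy : G.square'.Adj v y) : y = w ∨ G.Adj w y := by
  obtain ⟨-, hadj | ⟨m, hvm, hmy⟩⟩ := hvy
  · exact Or.inl (hv y hadj)
  · exact Or.inr (hv m hvm ▸ hmy)

theorem card_neighborFinset_erase_lt [Fintype V] [DecidableRel G.Adj] [DecidableEq V]
    (hwv : G.Adj w v) :
    ((G.neighborFinset w).erase v).card < 2 * ((G.maxDegree + 1) / 2) := by
  have hv : v ∈ G.neighborFinset w := (mem_neighborFinset G w v).mpr hwv
  have hpos : 0 < G.degree w := Finset.card_pos.mpr ⟨v, hv⟩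
  have hmax : G.degree w ≤ G.maxDegree := G.degree_le_maxDegree w
  rw [Finset.card_erase_of_mem hv, card_neighborFinset_eq_degree]
  omega

theorem exists_span_avoiding_neighbors [Fintype V] [DecidableRel G.Adj] (hvw : G.Adj v w) (s : ℕ)
    (c : ({v}ᶜ : Set V) → ℤ) :
    ∃ x : ℤ, ((s : ℤ) + 1 ≤ |x| ∧ |x| ≤ (s : ℤ) + ((G.maxDegree + 1) / 2 : ℕ)) ∧
      ∀ u : ({v}ᶜ : Set V), G.Adj w u → c u ≠ c ⟨w, hvw.ne'⟩ + x := by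
  classical
  let N : Finset ({v}ᶜ : Set V) := {u | G.Adj w u}
  have hN : N.card < 2 * ((G.maxDegree + 1) / 2) := by
    refine lt_of_le_of_lt ?_ (card_neighborFinset_erase_lt hvw.symm)
    rw [← Finset.card_map (Function.Embedding.subtype _)]
    refine Finset.card_le_card fun u hu => ?_
    obtain ⟨⟨u, huv⟩, huN, rfl⟩ := Finset.mem_map.mp hu
    simp only [N, Finset.mem_filter] at huN
    exact Finset.mem_erase.mpr ⟨huv, (mem_neighborFinset G w u).mpr huN.2⟩
  obtain ⟨x, hx, hxB⟩ := Int.exists_abs_bounds_notMem_of_card_lt s _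
    (N.image fun u => c u - c ⟨w, hvw.ne'⟩) (Finset.card_image_le.trans_lt hN)
  refine ⟨x, hx, fun u hwu hux => hxB (Finset.mem_image.mpr ⟨u, ?_, ?_⟩)⟩
  · simpa [N] using hwu
  · rw [hux]; ring

end SimpleGraph

open Function SimpleGraph in
theorem tree_leaf_extension_general {V : Type*} [Fintype V]
    (T : SimpleGraph V) [DecidableRel T.Adj]
    (v w : V) (hleaf : T.degree v = 1) (hvw : T.Adj v w) (s : ℕ)
    (c : ({v}ᶜ : Set V) → ℤ)
    (hc : ∀ x y, (T.induce ({v}ᶜ : Set V)).square'.Adj x y → c x ≠ c y)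
    (hspan : ∀ x y, (T.induce ({v}ᶜ : Set V)).Adj x y →
      (s : ℤ) + 1 ≤ |c x - c y| ∧ |c x - c y| ≤ (s : ℤ) + ((T.maxDegree + 1) / 2 : ℕ)) :
    ∃ x : ℤ, ((s : ℤ) + 1 ≤ |x| ∧ |x| ≤ (s : ℤ) + ((T.maxDegree + 1) / 2 : ℕ)) ∧
      (∀ u : ({v}ᶜ : Set V), T.Adj w u →
        c u ≠ c ⟨w, Set.mem_compl_singleton_iff.mpr hvw.ne'⟩ + x) ∧
      ∃ c' : V → ℤ,
        (∀ u (h : u ∈ ({v}ᶜ : Set V)), c' u = c ⟨u, h⟩) ∧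
        c' v = c ⟨w, Set.mem_compl_singleton_iff.mpr hvw.ne'⟩ + x ∧
        (∀ x y, T.square'.Adj x y → c' x ≠ c' y) ∧
        (∀ x y, T.Adj x y →
          (s : ℤ) + 1 ≤ |c' x - c' y| ∧
          |c' x - c' y| ≤ (s : ℤ) + ((T.maxDegree + 1) / 2 : ℕ)) := by
  classical
  have hv : ∀ y, T.Adj v y → y = w := fun _ => eq_of_adj_of_degree_eq_one hleaf hvw
  obtain ⟨x, hx, hxN⟩ := exists_span_avoiding_neighbors hvw s c
  set cw := c ⟨w, hvw.ne'⟩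
  refine ⟨x, hx, hxN, extendAt v c (cw + x), fun u hu => extendAt_of_ne hu, extendAt_self,
    ?_, ?_⟩
  · refine rel_extendAt_of_adj _ (fun _ _ => Ne.symm)
      (fun a b hab => hc a b (square'_adj_induce_compl_of_adj hv hab)) fun y hy hvy => ?_
    rcases square'_adj_of_unique_adj hv hvy with rfl | hwy
    · have : x ≠ 0 := by rintro rfl; simp only [abs_zero] at hx; omega
      omega
    · exact (hxN ⟨y, hy⟩ hwy).symm
  · refine rel_extendAt_of_adj T (P := fun p q => (s : ℤ) + 1 ≤ |p - q| ∧
      |p - q| ≤ (s : ℤ) + ((T.maxDegree + 1) / 2 : ℕ))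
      (fun p q h => by rwa [abs_sub_comm]) hspan fun y hy hvy => ?_
    obtain rfl := hv y hvy
    simpa [cw] using hx

theorem tree_leaf_extension {V : Type*} [Fintype V]
    (T : SimpleGraph V) [DecidableRel T.Adj] (hT : T.IsTree)
    (hcard : 3 ≤ Fintype.card V)
    (v w : V) (hleaf : T.degree v = 1) (hvw : T.Adj v w) (s : ℕ)
    (c : ({v}ᶜ : Set V) → ℤ)
    (hc : ∀ x y, (T.induce ({v}ᶜ : Set V)).square'.Adj x y → c x ≠ c y)
    (hspan : ∀ x y, (T.induce ({v}ᶜ : Set V)).Adj x y →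
      (s : ℤ) + 1 ≤ |c x - c y| ∧ |c x - c y| ≤ (s : ℤ) + ((T.maxDegree + 1) / 2 : ℕ)) :
    ∃ x : ℤ, ((s : ℤ) + 1 ≤ |x| ∧ |x| ≤ (s : ℤ) + ((T.maxDegree + 1) / 2 : ℕ)) ∧
      (∀ u : ({v}ᶜ : Set V), T.Adj w u →
        c u ≠ c ⟨w, Set.mem_compl_singleton_iff.mpr hvw.ne'⟩ + x) ∧
      ∃ c' : V → ℤ,
        (∀ u (h : u ∈ ({v}ᶜ : Set V)), c' u = c ⟨u, h⟩) ∧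
        c' v = c ⟨w, Set.mem_compl_singleton_iff.mpr hvw.ne'⟩ + x ∧
        (∀ x y, T.square'.Adj x y → c' x ≠ c' y) ∧
        (∀ x y, T.Adj x y →
          (s : ℤ) + 1 ≤ |c' x - c' y| ∧
          |c' x - c' y| ≤ (s : ℤ) + ((T.maxDegree + 1) / 2 : ℕ)) :=
  tree_leaf_extension_general T v w hleaf hvw s c hc hspan
end
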